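/- Let p ≥ 5 be prime and d ≥ 2 with p ∤ d(d-1) and gcd(p-1, d-1) = 1. Then the derivative f_d' of f_d = t^d - d·t - 1 over F_p has d-1 distinct roots in an algebraic closure of F_p, and f_d takes distinct values at these roots. -/

import Mathlib

/-!
In characteristic `p ∤ d(d-1)`, `f_d' = d (t^(d-1) - 1)` is separable, so its roots are the
`d - 1` distinct `(d-1)`-st roots of unity `μ`. At such a root `μ ^ d = μ`, hence
`f_d(μ) = (1 - d) μ - 1`, an injective affine function of `μ`.
-/

open Polynomial

namespace Polynomial

section CommRing

variable {R : Type*} [CommRing R]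

theorem map_X_pow_sub_C_mul_X_sub_one {S : Type*} [CommRing S] (φ : R →+* S) (d : ℕ) :
    (X ^ d - C (d : R) * X - 1 : R[X]).map φ = X ^ d - C (d : S) * X - 1 := by
  simp

theorem derivative_X_pow_sub_C_mul_X_sub_one (d : ℕ) :
    derivative (X ^ d - C (d : R) * X - 1 : R[X]) = C (d : R) * (X ^ (d - 1) - C 1) := by
  simp only [derivative_sub, derivative_X_pow, derivative_C_mul_X, derivative_one, map_one]
  ring

theorem eval_X_pow_sub_C_mul_X_sub_one_of_pow_eq_one {d : ℕ} (hd : d ≠ 0) {μ : R}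
    (hμ : μ ^ (d - 1) = 1) :
    eval μ (X ^ d - C (d : R) * X - 1) = -(((d - 1 : ℕ) : R) * μ + 1) := by
  obtain ⟨n, rfl⟩ := Nat.exists_eq_succ_of_ne_zero hd
  simp only [Nat.succ_sub_one] at hμ ⊢
  simp only [eval_sub, eval_pow, eval_mul, eval_X, eval_C, eval_one, pow_succ, hμ]
  push_cast
  ring

theorem injOn_eval_X_pow_sub_C_mul_X_sub_one [IsDomain R] {d : ℕ}
    (hd : ((d - 1 : ℕ) : R) ≠ 0) :
    Set.InjOn (fun μ => eval μ (X ^ d - C (d : R) * X - 1)) {μ | μ ^ (d - 1) = 1} := by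
  have hd0 : d ≠ 0 := by rintro rfl; simp at hd
  intro μ₁ hμ₁ μ₂ hμ₂ heq
  simp only [eval_X_pow_sub_C_mul_X_sub_one_of_pow_eq_one hd0 hμ₁,
    eval_X_pow_sub_C_mul_X_sub_one_of_pow_eq_one hd0 hμ₂, neg_inj, add_left_inj] at heq
  exact mul_left_cancel₀ hd heq

end CommRing

section Field

variable {K : Type*} [Field K]

theorem roots_derivative_X_pow_sub_C_mul_X_sub_one {d : ℕ} (hd : (d : K) ≠ 0) :
    (derivative (X ^ d - C (d : K) * X - 1 : K[X])).roots = nthRoots (d - 1) (1 : K) := by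
  rw [derivative_X_pow_sub_C_mul_X_sub_one, roots_C_mul _ hd, nthRoots]

theorem card_toFinset_nthRoots_one [IsAlgClosed K] [DecidableEq K] {n : ℕ} (hn : (n : K) ≠ 0) :
    (nthRoots n (1 : K)).toFinset.card = n := by
  have hsep : (X ^ n - C (1 : K)).Separable := separable_X_pow_sub_C 1 hn one_ne_zero
  rw [nthRoots, Multiset.toFinset_card_of_nodup (nodup_roots hsep),
    IsAlgClosed.card_roots_eq_natDegree, natDegree_X_pow_sub_C]

end Field

end Polynomial

open scoped Classical in
theorem stmt10_general (p : ℕ) [Fact p.Prime]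
    (d : ℕ) (hpd : ¬ p ∣ d * (d - 1)) :
    ((derivative ((X ^ d - C (d : ZMod p) * X - 1 : (ZMod p)[X]).map
        (algebraMap (ZMod p) (AlgebraicClosure (ZMod p))))).roots.toFinset.card = d - 1)
    ∧ ∀ μ₁ ∈ (derivative ((X ^ d - C (d : ZMod p) * X - 1 : (ZMod p)[X]).map
          (algebraMap (ZMod p) (AlgebraicClosure (ZMod p))))).roots.toFinset,
      ∀ μ₂ ∈ (derivative ((X ^ d - C (d : ZMod p) * X - 1 : (ZMod p)[X]).map
          (algebraMap (ZMod p) (AlgebraicClosure (ZMod p))))).roots.toFinset,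
        ((X ^ d - C (d : ZMod p) * X - 1 : (ZMod p)[X]).map
            (algebraMap (ZMod p) (AlgebraicClosure (ZMod p)))).eval μ₁ =
          ((X ^ d - C (d : ZMod p) * X - 1 : (ZMod p)[X]).map
            (algebraMap (ZMod p) (AlgebraicClosure (ZMod p)))).eval μ₂ → μ₁ = μ₂ := by
  set K := AlgebraicClosure (ZMod p)
  have hdK : (d : K) ≠ 0 := by
    rw [Ne, CharP.cast_eq_zero_iff K p]
    exact fun h => hpd (h.mul_right _)
  have hd1K : ((d - 1 : ℕ) : K) ≠ 0 := by
    rw [Ne, CharP.cast_eq_zero_iff K p]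
    exact fun h => hpd (h.mul_left _)
  have hd1 : 0 < d - 1 := Nat.pos_of_ne_zero fun h => hd1K (by simp [h])
  rw [map_X_pow_sub_C_mul_X_sub_one, roots_derivative_X_pow_sub_C_mul_X_sub_one hdK]
  refine ⟨card_toFinset_nthRoots_one hd1K, fun μ₁ hμ₁ μ₂ hμ₂ heq => ?_⟩
  rw [Multiset.mem_toFinset, mem_nthRoots hd1] at hμ₁ hμ₂
  exact injOn_eval_X_pow_sub_C_mul_X_sub_one hd1K hμ₁ hμ₂ heq

open scoped Classical in
/-- For `p ≥ 5` prime and `d ≥ 2` with `p ∤ d(d-1)` and `gcd(p-1, d-1) = 1`, the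
derivative of `f_d = t^d - d·t - 1` over `F_p` has `d - 1` distinct roots in an
algebraic closure of `F_p`, and `f_d` takes distinct values at these roots. -/
theorem stmt10 (p : ℕ) (hp : p.Prime) [Fact p.Prime] (hp5 : 5 ≤ p)
    (d : ℕ) (hd : 2 ≤ d) (hpd : ¬ p ∣ d * (d - 1)) (hgcd : Nat.gcd (p - 1) (d - 1) = 1) :
    ((derivative ((X ^ d - C (d : ZMod p) * X - 1 : (ZMod p)[X]).map
        (algebraMap (ZMod p) (AlgebraicClosure (ZMod p))))).roots.toFinset.card = d - 1)
    ∧ ∀ μ₁ ∈ (derivative ((X ^ d - C (d : ZMod p) * X - 1 : (ZMod p)[X]).map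
          (algebraMap (ZMod p) (AlgebraicClosure (ZMod p))))).roots.toFinset,
      ∀ μ₂ ∈ (derivative ((X ^ d - C (d : ZMod p) * X - 1 : (ZMod p)[X]).map
          (algebraMap (ZMod p) (AlgebraicClosure (ZMod p))))).roots.toFinset,
        ((X ^ d - C (d : ZMod p) * X - 1 : (ZMod p)[X]).map
            (algebraMap (ZMod p) (AlgebraicClosure (ZMod p)))).eval μ₁ =
          ((X ^ d - C (d : ZMod p) * X - 1 : (ZMod p)[X]).map
            (algebraMap (ZMod p) (AlgebraicClosure (ZMod p)))).eval μ₂ → μ₁ = μ₂ :=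
  stmt10_general p d hpd
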